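/- Let n ≥ 1 be an integer, d a real number, z a nonzero complex number, and w any complex number. Define J_n(w) = Σ_{k=1}^{n} w^k / k, D_n(w; d) = Σ_{k=0}^{n} ((−d)_k / k!) w^k, j̃_p = Σ_{k=p+1}^{n} z^k / k, and d̃_p = Σ_{k=p+1}^{n} ((−d)_k / k!) z^k, where (a)_k is the Pochhammer symbol. Then J_n(w) D_n(w; d) = J_n(z) D_n(z; d) + D_n(z; d) ( Σ_{p=0}^{n-1} j̃_p (z^{−1}w)^p ) (z^{−1}w − 1) + J_n(w) ( Σ_{p=0}^{n-1} d̃_p (z^{−1}w)^p ) (z^{−1}w − 1). -/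

import Mathlib

/-- Pochhammer symbol `(a)_k = a (a+1) ⋯ (a+k-1)`. -/
noncomputable def poch (a : ℝ) (k : ℕ) : ℝ := ∏ i ∈ Finset.range k, (a + i)

/-- `J_n(w) = ∑_{k=1}^n w^k / k`. -/
noncomputable def Jn (n : ℕ) (w : ℂ) : ℂ := ∑ k ∈ Finset.Icc 1 n, w ^ k / (k : ℂ)

/-- `D_n(w; d) = ∑_{k=0}^n ((-d)_k / k!) w^k`. -/
noncomputable def Dn (n : ℕ) (d : ℝ) (w : ℂ) : ℂ :=
  ∑ k ∈ Finset.range (n + 1), ((poch (-d) k / (Nat.factorial k) : ℝ) : ℂ) * w ^ k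

/-!
Writing `w = z x` with `x = z⁻¹ w`, each coefficient sum `P(w) = ∑ₖ cₖ wᵏ` satisfies
`P(z x) - P(z) = ∑ₖ cₖ zᵏ (xᵏ - 1) = (∑ₚ (∑_{k > p} cₖ zᵏ) xᵖ) (x - 1)` by the geometric sum
`xᵏ - 1 = (∑_{p < k} xᵖ) (x - 1)` and an exchange of summation. The theorem is then the
identity `J(w) D(w) = J(z) D(z) + D(z) (J(w) - J(z)) + J(w) (D(w) - D(z))`.
-/

open Finset

theorem sum_range_succ_sum_range_comm {M : Type*} [AddCommMonoid M] (n : ℕ) (F : ℕ → ℕ → M) :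
    ∑ k ∈ range (n + 1), ∑ p ∈ range k, F k p = ∑ p ∈ range n, ∑ k ∈ Icc (p + 1) n, F k p :=
  sum_comm' fun k p => by simp only [mem_range, mem_Icc]; omega

theorem sum_mul_mul_pow_sub_sum_mul_pow {R : Type*} [CommRing R] (c : ℕ → R) (n : ℕ) (z x : R) :
    ∑ k ∈ range (n + 1), c k * (z * x) ^ k - ∑ k ∈ range (n + 1), c k * z ^ k =
      (∑ p ∈ range n, (∑ k ∈ Icc (p + 1) n, c k * z ^ k) * x ^ p) * (x - 1) := by
  calc _ = ∑ k ∈ range (n + 1), ∑ p ∈ range k, c k * z ^ k * (x ^ p * (x - 1)) := by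
        rw [← sum_sub_distrib]
        refine sum_congr rfl fun k _ => ?_
        rw [← mul_sum, ← sum_mul, geom_sum_mul, mul_pow]
        ring
    _ = _ := by
        rw [sum_range_succ_sum_range_comm, sum_mul]
        simp only [sum_mul, mul_assoc]

-- The added `k = 0` term vanishes because `(0 : ℂ)⁻¹ = 0`.
theorem Jn_eq_sum_range (n : ℕ) (w : ℂ) : Jn n w = ∑ k ∈ range (n + 1), (k : ℂ)⁻¹ * w ^ k := by
  simp_rw [inv_mul_eq_div]
  refine sum_subset (fun k hk => ?_) fun k hk hk' => ?_
  · simp only [mem_Icc, mem_range] at hk ⊢; omega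
  · obtain rfl : k = 0 := by simp only [mem_Icc, mem_range] at hk hk'; omega
    simp

theorem Jn_mul_sub (n : ℕ) (z x : ℂ) :
    Jn n (z * x) - Jn n z =
      (∑ p ∈ range n, (∑ k ∈ Icc (p + 1) n, z ^ k / (k : ℂ)) * x ^ p) * (x - 1) := by
  rw [Jn_eq_sum_range, Jn_eq_sum_range, sum_mul_mul_pow_sub_sum_mul_pow]
  simp only [inv_mul_eq_div]

theorem Dn_mul_sub (n : ℕ) (d : ℝ) (z x : ℂ) :
    Dn n d (z * x) - Dn n d z =
      (∑ p ∈ range n, (∑ k ∈ Icc (p + 1) n,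
        ((poch (-d) k / (Nat.factorial k) : ℝ) : ℂ) * z ^ k) * x ^ p) * (x - 1) :=
  sum_mul_mul_pow_sub_sum_mul_pow _ n z x

theorem log_filter_product_decomposition_general (n : ℕ) (d : ℝ)
    (z : ℂ) (hz : z ≠ 0) (w : ℂ) :
    Jn n w * Dn n d w =
      Jn n z * Dn n d z +
        Dn n d z *
          (∑ p ∈ Finset.range n,
              (∑ k ∈ Finset.Icc (p + 1) n, z ^ k / (k : ℂ)) * (z⁻¹ * w) ^ p) *
          (z⁻¹ * w - 1) +
        Jn n w *
          (∑ p ∈ Finset.range n,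
              (∑ k ∈ Finset.Icc (p + 1) n,
                  ((poch (-d) k / (Nat.factorial k) : ℝ) : ℂ) * z ^ k) * (z⁻¹ * w) ^ p) *
          (z⁻¹ * w - 1) := by
  have hw : z * (z⁻¹ * w) = w := mul_inv_cancel_left₀ hz w
  have hJ := Jn_mul_sub n z (z⁻¹ * w)
  have hD := Dn_mul_sub n d z (z⁻¹ * w)
  rw [hw] at hJ hD
  linear_combination Dn n d z * hJ + Jn n w * hD

/-- Lemma 5.7(b): exact decomposition of the product `J_n(w) D_n(w; d)`. -/
theorem log_filter_product_decomposition (n : ℕ) (hn : 1 ≤ n) (d : ℝ)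
    (z : ℂ) (hz : z ≠ 0) (w : ℂ) :
    Jn n w * Dn n d w =
      Jn n z * Dn n d z +
        Dn n d z *
          (∑ p ∈ Finset.range n,
              (∑ k ∈ Finset.Icc (p + 1) n, z ^ k / (k : ℂ)) * (z⁻¹ * w) ^ p) *
          (z⁻¹ * w - 1) +
        Jn n w *
          (∑ p ∈ Finset.range n,
              (∑ k ∈ Finset.Icc (p + 1) n,
                  ((poch (-d) k / (Nat.factorial k) : ℝ) : ℂ) * z ^ k) * (z⁻¹ * w) ^ p) *
          (z⁻¹ * w - 1) :=
  log_filter_product_decomposition_general n d z hz w
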